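/- arXiv:2109.03663 — 3 statements merged into one kernel-verified Lean document; each statement's English description precedes it below -/
import Mathlib

section
/- Let h ∈ ℂ^M and H ∈ ℂ^{M×N} with Hᴴh ≠ 0. Let λ_1,…,λ_N ≥ 0 be the eigenvalues of HᴴH with corresponding orthonormal eigenvectors u_1,…,u_N ∈ ℂ^N. Suppose γ* ∈ ℝ satisfies γ* > max_d λ_d and ∑_{d=1}^N |u_dᴴ Hᴴ h|²/(γ* − λ_d)² = N. Define φ* = ∑_{d=1}^N (u_dᴴ Hᴴ h)/(γ* − λ_d) · u_d. Then ‖φ*‖² = N, and for every φ ∈ ℂ^N with ‖φ‖² ≤ N one has ‖h + Hφ‖² ≤ ‖h + Hφ*‖²; i.e., φ* is a global maximizer of ‖h + Hφ‖² over the ball {φ : ‖φ‖² ≤ N}. -/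
/-!
Write `T` for `H` acting on `ℂ^N` and `A = TᴴT`. The `u_d` form an orthonormal eigenbasis of `A`,
so `λ_d < γ` gives `‖T x‖² ≤ γ ‖x‖²`, and the definition of `φ*` says exactly
`(γ - A) φ* = Tᴴ h`. Expanding the squares with this stationarity condition gives
`‖h + Tφ*‖² - ‖h + Tφ‖² = γ (‖φ*‖² - ‖φ‖²) + (γ ‖φ - φ*‖² - ‖T (φ - φ*)‖²)`,
and both terms are nonnegative (recall `γ > λ_d ≥ 0`) once `‖φ‖² ≤ N = ‖φ*‖²`, the last equality
being Parseval's identity in the eigenbasis together with the secular equation.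
-/

open Matrix

/-- Squared Euclidean norm of a complex vector. -/
noncomputable def enormSq {n : ℕ} (v : Fin n → ℂ) : ℝ := ∑ i, ‖v i‖ ^ 2

/-- Hermitian inner product `uᴴ v` on `ℂ^n`. -/
noncomputable def cinner {n : ℕ} (u v : Fin n → ℂ) : ℂ :=
  ∑ j, (starRingEnd ℂ) (u j) * v j

open WithLp
open scoped InnerProductSpace

section Stationary

variable {𝕜 E F : Type*} [RCLike 𝕜] [NormedAddCommGroup E] [InnerProductSpace 𝕜 E]
  [NormedAddCommGroup F] [InnerProductSpace 𝕜 F] [FiniteDimensional 𝕜 E] [FiniteDimensional 𝕜 F]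

theorem norm_add_apply_sq_le_of_stationary {T : E →ₗ[𝕜] F} {h : F} {γ : ℝ} {φs φ : E}
    (hγ : 0 ≤ γ) (hT : ∀ x, ‖T x‖ ^ 2 ≤ γ * ‖x‖ ^ 2)
    (hstat : (γ : 𝕜) • φs - T.adjoint (T φs) = T.adjoint h) (hφ : ‖φ‖ ^ 2 ≤ ‖φs‖ ^ 2) :
    ‖h + T φ‖ ^ 2 ≤ ‖h + T φs‖ ^ 2 := by
  have hre : ∀ x, RCLike.re ⟪h, T x⟫_𝕜
      = γ * RCLike.re ⟪φs, x⟫_𝕜 - RCLike.re ⟪T φs, T x⟫_𝕜 := fun x => by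
    rw [← LinearMap.adjoint_inner_left, ← hstat, inner_sub_left, inner_smul_left,
      LinearMap.adjoint_inner_left, RCLike.conj_ofReal, map_sub, RCLike.re_ofReal_mul]
  have hgap := hT (φ - φs)
  have hball := mul_le_mul_of_nonneg_left hφ hγ
  rw [map_sub, norm_sub_sq (𝕜 := 𝕜), norm_sub_sq (𝕜 := 𝕜)] at hgap
  rw [norm_add_sq (𝕜 := 𝕜), norm_add_sq (𝕜 := 𝕜), hre, hre, inner_self_eq_norm_sq,
    inner_self_eq_norm_sq, inner_re_symm (𝕜 := 𝕜) φs, inner_re_symm (𝕜 := 𝕜) (T φs)]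
  linarith

end Stationary

namespace OrthonormalBasis

variable {𝕜 E ι : Type*} [RCLike 𝕜] [NormedAddCommGroup E] [InnerProductSpace 𝕜 E] [Fintype ι]
  (b : OrthonormalBasis ι 𝕜 E) {A : E →ₗ[𝕜] E} {lam : ι → ℝ}

theorem norm_sum_smul_sq (a : ι → 𝕜) : ‖∑ i, a i • b i‖ ^ 2 = ∑ i, ‖a i‖ ^ 2 := by
  simp [← b.sum_sq_norm_inner_right, b.orthonormal.inner_right_fintype]

theorem apply_sum_smul_of_eigen (hA : ∀ i, A (b i) = (lam i : 𝕜) • b i) (a : ι → 𝕜) :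
    A (∑ i, a i • b i) = ∑ i, (a i * lam i) • b i := by
  simp [map_sum, hA, smul_smul]

theorem re_inner_apply_self_le (hA : ∀ i, A (b i) = (lam i : 𝕜) • b i) {γ : ℝ}
    (hγ : ∀ i, lam i ≤ γ) (x : E) : RCLike.re ⟪A x, x⟫_𝕜 ≤ γ * ‖x‖ ^ 2 := by
  have hAx : A x = ∑ i, (⟪b i, x⟫_𝕜 * lam i) • b i := by
    conv_lhs => rw [← b.sum_repr' x]
    exact b.apply_sum_smul_of_eigen hA _
  have hsum : RCLike.re ⟪A x, x⟫_𝕜 = ∑ i, lam i * ‖⟪b i, x⟫_𝕜‖ ^ 2 := by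
    rw [hAx, sum_inner, map_sum]
    refine Finset.sum_congr rfl fun i _ => ?_
    rw [inner_smul_left, map_mul (starRingEnd 𝕜), RCLike.conj_ofReal, mul_comm, ← mul_assoc,
      RCLike.mul_conj]
    norm_cast
    ring
  rw [hsum, ← b.sum_sq_norm_inner_right, Finset.mul_sum]
  gcongr with i
  exact hγ i

theorem smul_sub_apply_sum_div_eq (hA : ∀ i, A (b i) = (lam i : 𝕜) • b i) {γ : ℝ}
    (hγ : ∀ i, lam i ≠ γ) (g : E) :
    (γ : 𝕜) • (∑ i, (⟪b i, g⟫_𝕜 / ((γ - lam i : ℝ) : 𝕜)) • b i)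
      - A (∑ i, (⟪b i, g⟫_𝕜 / ((γ - lam i : ℝ) : 𝕜)) • b i) = g := by
  rw [b.apply_sum_smul_of_eigen hA, Finset.smul_sum, ← Finset.sum_sub_distrib]
  conv_rhs => rw [← b.sum_repr' g]
  refine Finset.sum_congr rfl fun i _ => ?_
  have : ((γ - lam i : ℝ) : 𝕜) ≠ 0 := by exact_mod_cast sub_ne_zero.2 (hγ i).symm
  rw [smul_smul, ← sub_smul]
  congr 1
  field_simp
  push_cast
  ring

end OrthonormalBasis

section MatrixAdjoint

variable {𝕜 : Type*} [RCLike 𝕜] {m n : Type*} [Fintype m] [Fintype n] [DecidableEq m]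
  [DecidableEq n]

theorem adjoint_toEuclideanLin_toLp (A : Matrix m n 𝕜) (x : m → 𝕜) :
    (toEuclideanLin A).adjoint (toLp 2 x) = toLp 2 (Aᴴ *ᵥ x) := by
  rw [← toEuclideanLin_conjTranspose_eq_adjoint]
  rfl

theorem adjoint_comp_toEuclideanLin_toLp (A : Matrix m n 𝕜) (x : n → 𝕜) :
    ((toEuclideanLin A).adjoint ∘ₗ toEuclideanLin A) (toLp 2 x) = toLp 2 ((Aᴴ * A) *ᵥ x) := by
  rw [LinearMap.comp_apply, ← mulVec_mulVec, ← adjoint_toEuclideanLin_toLp]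
  rfl

end MatrixAdjoint

theorem enormSq_eq_norm_sq {n : ℕ} (v : Fin n → ℂ) : enormSq v = ‖toLp 2 v‖ ^ 2 := by
  rw [EuclideanSpace.norm_sq_eq]; rfl

theorem cinner_eq_inner {n : ℕ} (u v : Fin n → ℂ) : cinner u v = ⟪toLp 2 u, toLp 2 v⟫_ℂ := by
  rw [EuclideanSpace.inner_toLp_toLp, dotProduct_comm]; rfl

theorem exists_orthonormalBasis_toLp_of_cinner {n : ℕ} {u : Fin n → Fin n → ℂ}
    (horth : ∀ d d', cinner (u d) (u d') = if d = d' then 1 else 0) :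
    ∃ b : OrthonormalBasis (Fin n) ℂ (EuclideanSpace ℂ (Fin n)), ∀ d, b d = toLp 2 (u d) := by
  have hon : Orthonormal ℂ fun d => (toLp 2 (u d) : EuclideanSpace ℂ (Fin n)) := by
    rw [orthonormal_iff_ite]
    simpa [← cinner_eq_inner] using horth
  exact ⟨.mk hon (hon.linearIndependent.span_eq_top_of_card_eq_finrank' (by simp)).ge,
    fun d => by simp⟩

/-- the eigendecomposition-based vector `φ*` with secular-equation
multiplier `γ* > max_d λ_d` has `‖φ*‖² = N` and globally maximizes `‖h + Hφ‖²`
over the ball `‖φ‖² ≤ N`. -/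
theorem stmt_1 (M N : ℕ)
    (h : Fin M → ℂ) (H : Matrix (Fin M) (Fin N) ℂ)
    (hne : Hᴴ.mulVec h ≠ 0)
    (lam : Fin N → ℝ) (u : Fin N → Fin N → ℂ)
    (hlam_nonneg : ∀ d, 0 ≤ lam d)
    (heig : ∀ d, (Hᴴ * H).mulVec (u d) = (lam d : ℂ) • u d)
    (horth : ∀ d d', cinner (u d) (u d') = if d = d' then 1 else 0)
    (γ : ℝ) (hγ : ∀ d, lam d < γ)
    (hsec : ∑ d, ‖cinner (u d) (Hᴴ.mulVec h)‖ ^ 2 / (γ - lam d) ^ 2 = (N : ℝ))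
    (φstar : Fin N → ℂ)
    (hφ : φstar = ∑ d, (cinner (u d) (Hᴴ.mulVec h) / ((γ - lam d : ℝ) : ℂ)) • u d) :
    enormSq φstar = (N : ℝ) ∧
    ∀ φ : Fin N → ℂ, enormSq φ ≤ (N : ℝ) →
      enormSq (h + H.mulVec φ) ≤ enormSq (h + H.mulVec φstar) := by
  have : Nonempty (Fin N) := not_isEmpty_iff.mp fun _ => hne (Subsingleton.elim _ _)
  have hγ0 : 0 ≤ γ := (hlam_nonneg (Classical.arbitrary _)).trans (hγ _).le
  obtain ⟨b, hb⟩ := exists_orthonormalBasis_toLp_of_cinner horth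
  set T := toEuclideanLin H
  have hA : ∀ d, (T.adjoint ∘ₗ T) (b d) = (lam d : ℂ) • b d := fun d => by
    rw [hb, adjoint_comp_toEuclideanLin_toLp, heig, WithLp.toLp_smul]
  have hTh : T.adjoint (toLp 2 h) = toLp 2 (Hᴴ *ᵥ h) := adjoint_toEuclideanLin_toLp H h
  have hφs : toLp 2 φstar
      = ∑ d, (⟪b d, T.adjoint (toLp 2 h)⟫_ℂ / ((γ - lam d : ℝ) : ℂ)) • b d := by
    simp [hφ, hb, hTh, cinner_eq_inner]
  have hnorm : enormSq φstar = N := by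
    rw [enormSq_eq_norm_sq, hφs, b.norm_sum_smul_sq, ← hsec]
    refine Finset.sum_congr rfl fun d _ => ?_
    rw [norm_div, div_pow, Complex.norm_real, Real.norm_eq_abs, sq_abs, hb,
      hTh, ← cinner_eq_inner]
  refine ⟨hnorm, fun φ hφle => ?_⟩
  rw [enormSq_eq_norm_sq, enormSq_eq_norm_sq]
  refine norm_add_apply_sq_le_of_stationary (T := T) hγ0 (fun x => ?_) ?_
    (by rwa [← enormSq_eq_norm_sq, ← enormSq_eq_norm_sq, hnorm])
  · calc ‖T x‖ ^ 2 = RCLike.re ⟪(T.adjoint ∘ₗ T) x, x⟫_ℂ := by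
          rw [LinearMap.comp_apply, LinearMap.adjoint_inner_left, inner_self_eq_norm_sq]
      _ ≤ γ * ‖x‖ ^ 2 := b.re_inner_apply_self_le hA (fun d => (hγ d).le) x
  · rw [hφs]
    exact b.smul_sub_apply_sum_div_eq hA (fun d => (hγ d).ne) _
end

section
/- Let h ∈ ℂ^M, H ∈ ℂ^{M×N}, let λ_1,…,λ_N ≥ 0 be the eigenvalues of HᴴH with orthonormal eigenvectors u_1,…,u_N, set λ_max = max_d λ_d, and define g(γ) = ∑_{d=1}^N |u_dᴴ Hᴴ h|²/(γ − λ_d)² for γ > λ_max. Assume there exists an index d̄ with λ_{d̄} = λ_max and u_{d̄}ᴴ Hᴴ h ≠ 0. Then g(γ) → ∞ as γ → λ_max from above, and for every real N' > 0 there exists a unique γ* ∈ (λ_max, ∞) with g(γ*) = N'. -/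
/-!
The secular function is a sum of terms `c_d / (γ - λ_d)²` with weights `c_d = ‖u_dᴴ Hᴴ h‖² ≥ 0`.
On `(λ_max, ∞)` every term is antitone, and the term of `d̄` is strictly antitone and blows up
at `λ_max = λ_d̄`; all terms vanish as `γ → ∞`. So `g` is a continuous strictly decreasing map of
the connected set `(λ_max, ∞)` onto `(0, ∞)`.
-/

open Matrix

open Filter Set Topology

section SecularFunction

variable {ι : Type*} [Fintype ι]

noncomputable def secularFun (c lam : ι → ℝ) (γ : ℝ) : ℝ :=
  ∑ d, c d / (γ - lam d) ^ 2

variable (c lam : ι → ℝ)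

lemma tendsto_div_sub_sq_nhdsGT {a : ℝ} (ha : 0 < a) (μ : ℝ) :
    Tendsto (fun γ => a / (γ - μ) ^ 2) (𝓝[>] μ) atTop := by
  have hsq : Tendsto (fun γ : ℝ => (γ - μ) ^ 2) (𝓝[>] μ) (𝓝[>] 0) := by
    refine tendsto_nhdsWithin_of_tendsto_nhds_of_eventually_within _ ?_ ?_
    · exact tendsto_nhdsWithin_of_tendsto_nhds <|
        (by fun_prop : Continuous fun γ : ℝ => (γ - μ) ^ 2).tendsto' μ 0 (by simp)
    · filter_upwards [self_mem_nhdsWithin] with γ (hγ : μ < γ)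
      exact pow_pos (sub_pos.2 hγ) 2
  simpa only [div_eq_mul_inv, Function.comp_def] using
    (tendsto_inv_nhdsGT_zero.comp hsq).const_mul_atTop ha

lemma tendsto_secularFun_nhdsGT (hc : 0 ≤ c) {d : ι} (hd : 0 < c d) :
    Tendsto (secularFun c lam) (𝓝[>] (lam d)) atTop := by
  refine tendsto_atTop_mono (fun γ => ?_) (tendsto_div_sub_sq_nhdsGT hd (lam d))
  exact Finset.single_le_sum (f := fun i => c i / (γ - lam i) ^ 2)
    (fun i _ => div_nonneg (hc i) (sq_nonneg _)) (Finset.mem_univ d)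

lemma tendsto_secularFun_atTop : Tendsto (secularFun c lam) atTop (𝓝 0) := by
  have hden (d : ι) : Tendsto (fun γ => (γ - lam d) ^ 2) atTop atTop := by
    simpa only [sub_eq_add_neg, Function.comp_def, id] using
      (tendsto_pow_atTop two_ne_zero).comp (tendsto_atTop_add_const_right _ (-lam d) tendsto_id)
  have := tendsto_finsetSum Finset.univ fun d _ =>
    (tendsto_const_nhds (x := c d)).div_atTop (hden d)
  rwa [Finset.sum_const_zero] at this

variable {c lam} {μ : ℝ}

lemma continuousOn_secularFun (hub : ∀ d, lam d ≤ μ) :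
    ContinuousOn (secularFun c lam) (Ioi μ) :=
  continuousOn_finsetSum _ fun d _ => continuousOn_const.div (by fun_prop) fun _ hγ =>
    pow_ne_zero 2 (sub_pos.2 ((hub d).trans_lt hγ)).ne'

lemma strictAntiOn_secularFun (hc : 0 ≤ c) {d : ι} (hd : 0 < c d) (hub : ∀ i, lam i ≤ μ) :
    StrictAntiOn (secularFun c lam) (Ioi μ) := by
  intro γ₁ (hγ₁ : μ < γ₁) γ₂ _ hlt
  have hpos : ∀ i, 0 < γ₁ - lam i := fun i => sub_pos.2 ((hub i).trans_lt hγ₁)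
  have hsq : ∀ i, (γ₁ - lam i) ^ 2 < (γ₂ - lam i) ^ 2 := fun i =>
    pow_lt_pow_left₀ (by linarith) (hpos i).le two_ne_zero
  refine Finset.sum_lt_sum (fun i _ => ?_) ⟨d, Finset.mem_univ d, ?_⟩
  · exact div_le_div_of_nonneg_left (hc i) (pow_pos (hpos i) 2) (hsq i).le
  · exact div_lt_div_of_pos_left hd (pow_pos (hpos d) 2) (hsq d)

theorem existsUnique_secularFun_eq (hc : 0 ≤ c) {d : ι} (hd : 0 < c d)
    (hub : ∀ i, lam i ≤ lam d) {y : ℝ} (hy : 0 < y) :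
    ∃! γ, γ ∈ Ioi (lam d) ∧ secularFun c lam γ = y := by
  obtain ⟨γ, hγ, rfl⟩ := isPreconnected_Ioi.intermediate_value_Ioi (l₂ := 𝓝[>] lam d)
    (le_principal_iff.2 (Ioi_mem_atTop _)) inf_le_right (continuousOn_secularFun hub)
    (tendsto_secularFun_atTop c lam) (tendsto_secularFun_nhdsGT c lam hc hd) hy
  exact ⟨γ, ⟨hγ, rfl⟩, fun γ' ⟨hγ', he⟩ =>
    (strictAntiOn_secularFun hc hd hub).injOn hγ' hγ he⟩

end SecularFunction

theorem stmt_5_general (M N : ℕ) (h : Fin M → ℂ) (H : Matrix (Fin M) (Fin N) ℂ)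
    (lam : Fin N → ℝ) (u : Fin N → Fin N → ℂ)
    (lamMax : ℝ) (hub : ∀ d, lam d ≤ lamMax)
    (hdom : ∃ dbar, lam dbar = lamMax ∧ cinner (u dbar) (Hᴴ.mulVec h) ≠ 0)
    (g : ℝ → ℝ)
    (hg : ∀ γ, g γ = ∑ d, ‖cinner (u d) (Hᴴ.mulVec h)‖ ^ 2 / (γ - lam d) ^ 2) :
    Filter.Tendsto g (nhdsWithin lamMax (Set.Ioi lamMax)) Filter.atTop ∧
    ∀ N' : ℝ, 0 < N' → ∃! γ : ℝ, γ ∈ Set.Ioi lamMax ∧ g γ = N' := by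
  obtain ⟨dbar, rfl, hne⟩ := hdom
  set c : Fin N → ℝ := fun d => ‖cinner (u d) (Hᴴ.mulVec h)‖ ^ 2
  obtain rfl : g = secularFun c lam := funext hg
  have hc : 0 ≤ c := fun d => sq_nonneg _
  have hdbar : 0 < c dbar := pow_pos (norm_pos_iff.2 hne) 2
  exact ⟨tendsto_secularFun_nhdsGT c lam hc hdbar,
    fun _ => existsUnique_secularFun_eq hc hdbar hub⟩

/-- if some eigenvector attaining the top eigenvalue `λ_max`
satisfies `u_d̄ᴴ Hᴴ h ≠ 0`, then the secular function `g` blows up as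
`γ → λ_max⁺`, and for every `N' > 0` there is a unique root
`γ* ∈ (λ_max, ∞)` of `g(γ*) = N'`. -/
theorem stmt_5 (M N : ℕ) (h : Fin M → ℂ) (H : Matrix (Fin M) (Fin N) ℂ)
    (lam : Fin N → ℝ) (u : Fin N → Fin N → ℂ)
    (hlam_nonneg : ∀ d, 0 ≤ lam d)
    (heig : ∀ d, (Hᴴ * H).mulVec (u d) = (lam d : ℂ) • u d)
    (horth : ∀ d d', cinner (u d) (u d') = if d = d' then 1 else 0)
    (lamMax : ℝ) (hub : ∀ d, lam d ≤ lamMax) (hmem : ∃ d, lam d = lamMax)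
    (hdom : ∃ dbar, lam dbar = lamMax ∧ cinner (u dbar) (Hᴴ.mulVec h) ≠ 0)
    (g : ℝ → ℝ)
    (hg : ∀ γ, g γ = ∑ d, ‖cinner (u d) (Hᴴ.mulVec h)‖ ^ 2 / (γ - lam d) ^ 2) :
    Filter.Tendsto g (nhdsWithin lamMax (Set.Ioi lamMax)) Filter.atTop ∧
    ∀ N' : ℝ, 0 < N' → ∃! γ : ℝ, γ ∈ Set.Ioi lamMax ∧ g γ = N' :=
  stmt_5_general M N h H lam u lamMax hub hdom g hg
end

section
/- Let K ≥ 1, p_max > 0, and let a_{ki} ≥ 0, b_k > 0, c_k > 0 (k, i ∈ {1,…,K}) be real constants with a_{kk} ≥ b_k for every k. Define SINR_k(p) = b_k p_k/(∑_i a_{ki} p_i − b_k p_k + c_k) and I_k(p) = (∑_i a_{ki} p_i − b_k p_k + c_k)/b_k for p ∈ ℝ^K, p ≥ 0. Consider the fixed-point iteration: given p^{(n)}, set q_k = I_k(p^{(n)}) for each k, and p^{(n+1)} = (p_max / max_k q_k) · q. Then for any initial point p^{(0)} with 0 < p^{(0)}_k for all k, the sequence (p^{(n)}) converges to a point p* with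 0 ≤ p* ≤ p_max componentwise, and p* is an optimal solution of the max-min fairness problem: min_{k} SINR_k(p*) ≥ min_k SINR_k(p) for every p ∈ ℝ^K with 0 ≤ p ≤ p_max componentwise. -/
/-!
The interference map is affine, `I(x) = A x + d` with `A ≥ 0` and `d > 0`. Because the noise
term `d` is positive, on the box `[0, pmax]ᴷ` it satisfies `I(x) ≤ (1 + θ (t - 1)) I(y)` whenever
`x ≤ t y`, `t ≥ 1`, for a fixed `θ < 1`. Writing `M(x/y) = maxₖ xₖ / yₖ`, this makes `I` contract
`M(x/y) M(y/x) - 1` (the exponential of Hilbert's projective distance, minus one) by the factor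
`θ`, and rescaling to peak `pmax` leaves that quantity unchanged. On peak-normalized vectors it
bounds the sup distance up to the factor `pmax`, so the iterates are Cauchy, and their limit `p*`
is a fixed point `p* = λ I(p*)` with peak `pmax`, at which every user has SINR `λ`. If a feasible
`q` had all SINRs above `λ`, then `q > λ I(q)`; comparing `p*` with `q` at an index maximizing
`p*ₖ / qₖ` (when that ratio is at least one), or at the peak of `p*` (when it is not), gives a
contradiction.
-/

open Filter Topology

section PeakNormalization

variable {ι : Type*}

noncomputable def maxRatio (x y : ι → ℝ) : ℝ := ⨆ k, x k / y k

/-- The exponential of Hilbert's projective distance between `x` and `y`. -/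
noncomputable def expHilbert (x y : ι → ℝ) : ℝ := maxRatio x y * maxRatio y x

noncomputable def peakNormalize (pmax : ℝ) (x : ι → ℝ) : ι → ℝ :=
  fun k => pmax / (⨆ j, x j) * x k

def IsPeakNormalized (pmax : ℝ) (x : ι → ℝ) : Prop :=
  (∀ k, 0 < x k ∧ x k ≤ pmax) ∧ ∃ k, x k = pmax

lemma expHilbert_comm (x y : ι → ℝ) : expHilbert x y = expHilbert y x := mul_comm _ _

variable [Fintype ι] {pmax : ℝ} {x y : ι → ℝ}

lemma le_maxRatio_mul (hy : ∀ k, 0 < y k) (k : ι) : x k ≤ maxRatio x y * y k :=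
  (div_le_iff₀ (hy k)).1 (le_ciSup (Finite.bddAbove_range fun k => x k / y k) k)

namespace IsPeakNormalized

variable (hx : IsPeakNormalized pmax x) (hy : IsPeakNormalized pmax y)
include hx hy

lemma one_le_maxRatio : 1 ≤ maxRatio x y := by
  obtain ⟨j, hj⟩ := hx.2
  exact ((one_le_div (hy.1 j).1).2 (hj ▸ (hy.1 j).2)).trans
    (le_ciSup (Finite.bddAbove_range fun k => x k / y k) j)

lemma one_le_expHilbert : 1 ≤ expHilbert x y :=
  one_le_mul_of_one_le_of_one_le (hx.one_le_maxRatio hy) (hy.one_le_maxRatio hx)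

lemma sub_le (k : ι) : x k - y k ≤ pmax * (expHilbert x y - 1) := by
  have ht := hx.one_le_maxRatio hy
  have hs := hy.one_le_maxRatio hx
  have hpmax : 0 < pmax := (hy.1 k).1.trans_le (hy.1 k).2
  calc x k - y k ≤ (maxRatio x y - 1) * y k := by
        linarith [le_maxRatio_mul (fun k => (hy.1 k).1) k (x := x)]
    _ ≤ (maxRatio x y - 1) * pmax := mul_le_mul_of_nonneg_left (hy.1 k).2 (by linarith)
    _ ≤ pmax * (expHilbert x y - 1) := by
        rw [expHilbert]
        nlinarith [mul_nonneg (mul_nonneg hpmax.le (by linarith : 0 ≤ maxRatio x y))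
          (sub_nonneg.2 hs)]

lemma dist_le : dist x y ≤ pmax * (expHilbert x y - 1) := by
  obtain ⟨j, hj⟩ := hx.2
  have hpmax : 0 < pmax := hj ▸ (hx.1 j).1
  refine (dist_pi_le_iff (mul_nonneg hpmax.le (sub_nonneg.2 (hx.one_le_expHilbert hy)))).2
    fun k => ?_
  rw [Real.dist_eq, abs_sub_le_iff]
  exact ⟨hx.sub_le hy k, expHilbert_comm y x ▸ hy.sub_le hx k⟩

end IsPeakNormalized

variable [Nonempty ι]

lemma zero_lt_ciSup (hx : ∀ k, 0 < x k) : 0 < ⨆ k, x k :=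
  (hx (Classical.arbitrary ι)).trans_le (le_ciSup (Finite.bddAbove_range x) _)

omit [Fintype ι] in
lemma maxRatio_le {t : ℝ} (hy : ∀ k, 0 < y k) (h : ∀ k, x k ≤ t * y k) : maxRatio x y ≤ t :=
  ciSup_le fun k => (div_le_iff₀ (hy k)).2 (h k)

lemma maxRatio_pos (hx : ∀ k, 0 < x k) (hy : ∀ k, 0 < y k) : 0 < maxRatio x y :=
  zero_lt_ciSup fun k => div_pos (hx k) (hy k)

lemma maxRatio_peakNormalize (hpmax : pmax ≠ 0) (hx : ∀ k, 0 < x k) (hy : ∀ k, 0 < y k) :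
    maxRatio (peakNormalize pmax x) (peakNormalize pmax y) =
      (⨆ j, y j) / (⨆ j, x j) * maxRatio x y := by
  have hSx := zero_lt_ciSup hx
  have hSy := zero_lt_ciSup hy
  rw [maxRatio, maxRatio, Real.mul_iSup_of_nonneg (by positivity)]
  congr 1
  ext k
  simp only [peakNormalize]
  field_simp

lemma expHilbert_peakNormalize (hpmax : pmax ≠ 0) (hx : ∀ k, 0 < x k) (hy : ∀ k, 0 < y k) :
    expHilbert (peakNormalize pmax x) (peakNormalize pmax y) = expHilbert x y := by
  have hSx := (zero_lt_ciSup hx).ne'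
  have hSy := (zero_lt_ciSup hy).ne'
  rw [expHilbert, expHilbert, maxRatio_peakNormalize hpmax hx hy,
    maxRatio_peakNormalize hpmax hy hx]
  field_simp

lemma isPeakNormalized_peakNormalize (hpmax : 0 < pmax) (hx : ∀ k, 0 < x k) :
    IsPeakNormalized pmax (peakNormalize pmax x) := by
  have hS := zero_lt_ciSup hx
  obtain ⟨j, hj⟩ := exists_eq_ciSup_of_finite (f := x)
  refine ⟨fun k => ⟨mul_pos (div_pos hpmax hS) (hx k), ?_⟩, j, ?_⟩
  · calc pmax / (⨆ j, x j) * x k ≤ pmax / (⨆ j, x j) * ⨆ j, x j := by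
          gcongr; exact le_ciSup (Finite.bddAbove_range x) k
      _ = pmax := div_mul_cancel₀ _ hS.ne'
  · simp only [peakNormalize, hj]
    exact div_mul_cancel₀ _ hS.ne'

lemma continuous_ciSup : Continuous fun x : ι → ℝ => ⨆ j, x j := by
  simp_rw [← Finset.sup'_univ_eq_ciSup]
  exact Continuous.finset_sup'_apply _ fun j _ => continuous_apply j

lemma continuousAt_peakNormalize (hx : (⨆ j, x j) ≠ 0) : ContinuousAt (peakNormalize pmax) x :=
  continuousAt_pi.2 fun k =>
    (continuousAt_const.div continuous_ciSup.continuousAt hx).mul (continuous_apply k).continuousAt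

end PeakNormalization

section InterferenceContraction

variable {ι : Type*}

structure IsInterferenceContraction (F : (ι → ℝ) → ι → ℝ) (pmax θ : ℝ) : Prop where
  pos : ∀ x, (∀ k, 0 ≤ x k) → ∀ k, 0 < F x k
  le_mul : ∀ x y t, 1 ≤ t → (∀ k, 0 ≤ y k ∧ y k ≤ pmax) → (∀ k, x k ≤ t * y k) →
    ∀ k, F x k ≤ (1 + θ * (t - 1)) * F y k
  continuous : Continuous F
  nonneg : 0 ≤ θ
  lt_one : θ < 1

namespace IsInterferenceContraction

variable [Fintype ι] [Nonempty ι] {F : (ι → ℝ) → ι → ℝ} {pmax θ : ℝ}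
  (hF : IsInterferenceContraction F pmax θ)
include hF

lemma maxRatio_le {x y : ι → ℝ} (hx : IsPeakNormalized pmax x) (hy : IsPeakNormalized pmax y) :
    maxRatio (F x) (F y) ≤ 1 + θ * (maxRatio x y - 1) :=
  _root_.maxRatio_le (hF.pos y fun k => (hy.1 k).1.le) <|
    hF.le_mul x y _ (hx.one_le_maxRatio hy) (fun k => ⟨(hy.1 k).1.le, (hy.1 k).2⟩)
      (le_maxRatio_mul fun k => (hy.1 k).1)

lemma expHilbert_sub_one_le {x y : ι → ℝ} (hx : IsPeakNormalized pmax x)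
    (hy : IsPeakNormalized pmax y) :
    expHilbert (F x) (F y) - 1 ≤ θ * (expHilbert x y - 1) := by
  have ht := hx.one_le_maxRatio hy
  have hs := hy.one_le_maxRatio hx
  have hpos : ∀ z, IsPeakNormalized pmax z → ∀ k, 0 < F z k :=
    fun z hz => hF.pos z fun k => (hz.1 k).1.le
  have hθθ : θ * θ ≤ θ := mul_le_of_le_one_right hF.nonneg hF.lt_one.le
  calc expHilbert (F x) (F y) - 1
      ≤ (1 + θ * (maxRatio x y - 1)) * (1 + θ * (maxRatio y x - 1)) - 1 := by
        refine sub_le_sub_right (mul_le_mul (hF.maxRatio_le hx hy) (hF.maxRatio_le hy hx)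
          (maxRatio_pos (hpos y hy) (hpos x hx)).le ?_) 1
        exact add_nonneg zero_le_one (mul_nonneg hF.nonneg (sub_nonneg.2 ht))
    _ ≤ θ * (expHilbert x y - 1) := by
        rw [expHilbert]
        nlinarith [mul_le_mul_of_nonneg_right hθθ
          (mul_nonneg (sub_nonneg.2 ht) (sub_nonneg.2 hs))]

lemma exists_le_mul_of_fixedPoint (hpmax : 0 < pmax) {s : ι → ℝ} (hs : IsPeakNormalized pmax s)
    (hfix : peakNormalize pmax (F s) = s) {q : ι → ℝ} (hq : ∀ k, 0 ≤ q k ∧ q k ≤ pmax) :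
    ∃ k, q k ≤ pmax / (⨆ j, F s j) * F q k := by
  set r := pmax / ⨆ j, F s j
  have hr : 0 < r := div_pos hpmax (zero_lt_ciSup (hF.pos s fun k => (hs.1 k).1.le))
  by_contra! hlt
  have hqpos : ∀ k, 0 < q k := fun k => (mul_pos hr (hF.pos q (fun k => (hq k).1) k)).trans (hlt k)
  obtain ⟨k, hk⟩ := exists_eq_ciSup_of_finite (f := fun k => s k / q k)
  set μ := maxRatio s q
  rcases le_or_gt 1 μ with hμ | hμ
  · have hθμ : θ * (μ - 1) ≤ μ - 1 := mul_le_of_le_one_left (sub_nonneg.2 hμ) hF.lt_one.le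
    have hFs := hF.le_mul s q μ hμ hq (le_maxRatio_mul hqpos) k
    have hFq := (hF.pos q (fun k => (hq k).1) k).le
    have hsk : s k = μ * q k := (div_eq_iff (hqpos k).ne').1 hk
    exact lt_irrefl (s k) <| calc
      s k = r * F s k := (congrFun hfix k).symm
      _ ≤ r * ((1 + θ * (μ - 1)) * F q k) := by gcongr
      _ ≤ r * (μ * F q k) := by gcongr; linarith
      _ = μ * (r * F q k) := by ring
      _ < μ * q k := mul_lt_mul_of_pos_left (hlt k) (by linarith)
      _ = s k := hsk.symm
  · obtain ⟨j, hj⟩ := hs.2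
    exact lt_irrefl pmax <| calc
      pmax = s j := hj.symm
      _ ≤ μ * q j := le_maxRatio_mul hqpos j
      _ < q j := mul_lt_of_lt_one_left (hqpos j) hμ
      _ ≤ pmax := (hq j).2

variable (hpmax : 0 < pmax) {p : ℕ → ι → ℝ} (hp0 : ∀ k, 0 < p 0 k)
  (hrec : ∀ n, p (n + 1) = peakNormalize pmax (F (p n)))
include hpmax hp0 hrec

lemma isPeakNormalized_iterate (n : ℕ) : IsPeakNormalized pmax (p (n + 1)) := by
  induction n with
  | zero => exact hrec 0 ▸ isPeakNormalized_peakNormalize hpmax (hF.pos _ fun k => (hp0 k).le)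
  | succ n ih =>
    exact hrec (n + 1) ▸ isPeakNormalized_peakNormalize hpmax (hF.pos _ fun k => (ih.1 k).1.le)

lemma expHilbert_iterate_sub_one_le (n : ℕ) :
    expHilbert (p (n + 1)) (p (n + 2)) - 1 ≤ θ ^ n * (expHilbert (p 1) (p 2) - 1) := by
  induction n with
  | zero => simp
  | succ n ih =>
    have hn := hF.isPeakNormalized_iterate hpmax hp0 hrec
    have hpos : ∀ m k, 0 < F (p (m + 1)) k := fun m => hF.pos _ fun k => ((hn m).1 k).1.le
    have h2 : p (n + 2) = peakNormalize pmax (F (p (n + 1))) := hrec (n + 1)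
    have h3 : p (n + 3) = peakNormalize pmax (F (p (n + 2))) := hrec (n + 2)
    calc expHilbert (p (n + 2)) (p (n + 3)) - 1
        = expHilbert (F (p (n + 1))) (F (p (n + 2))) - 1 := by
          conv_lhs => rw [h2, h3]
          rw [expHilbert_peakNormalize hpmax.ne' (hpos n) (hpos (n + 1))]
      _ ≤ θ * (expHilbert (p (n + 1)) (p (n + 2)) - 1) :=
          hF.expHilbert_sub_one_le (hn n) (hn (n + 1))
      _ ≤ θ * (θ ^ n * (expHilbert (p 1) (p 2) - 1)) := by gcongr; exact hF.nonneg
      _ = θ ^ (n + 1) * (expHilbert (p 1) (p 2) - 1) := by ring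

theorem exists_tendsto_iterate :
    ∃ s, Tendsto p atTop (𝓝 s) ∧ peakNormalize pmax (F s) = s ∧ IsPeakNormalized pmax s := by
  have hn := hF.isPeakNormalized_iterate hpmax hp0 hrec
  have hp : ∀ n k, 0 ≤ p n k
    | 0, k => (hp0 k).le
    | n + 1, k => ((hn n).1 k).1.le
  have hcauchy : CauchySeq fun n => p (n + 1) :=
    cauchySeq_of_le_geometric θ (pmax * (expHilbert (p 1) (p 2) - 1)) hF.lt_one fun n =>
      ((hn n).dist_le (hn (n + 1))).trans <| by
        rw [mul_assoc, mul_comm _ (θ ^ n)]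
        gcongr
        exact hF.expHilbert_iterate_sub_one_le hpmax hp0 hrec n
  obtain ⟨s, hs⟩ := cauchySeq_tendsto_of_complete hcauchy
  have hlim : Tendsto p atTop (𝓝 s) := (tendsto_add_atTop_iff_nat 1).1 hs
  have hs0 : ∀ k, 0 ≤ s k := fun k =>
    ge_of_tendsto' (tendsto_pi_nhds.1 hlim k) fun n => hp n k
  have hfix : peakNormalize pmax (F s) = s := by
    refine tendsto_nhds_unique ?_ hs
    simp_rw [hrec]
    exact (continuousAt_peakNormalize (zero_lt_ciSup (hF.pos s hs0)).ne').tendsto.comp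
      (hF.continuous.tendsto s |>.comp hlim)
  exact ⟨s, hlim, hfix, hfix ▸ isPeakNormalized_peakNormalize hpmax (hF.pos s hs0)⟩

end IsInterferenceContraction

end InterferenceContraction

section Affine

variable {ι : Type*} [Fintype ι] [Nonempty ι] {A : ι → ι → ℝ} {d : ι → ℝ} {pmax : ℝ}

lemma exists_sum_mul_le_mul_add (hA : ∀ k i, 0 ≤ A k i) (hd : ∀ k, 0 < d k) (hpmax : 0 ≤ pmax) :
    ∃ θ, 0 ≤ θ ∧ θ < 1 ∧ ∀ y : ι → ℝ, (∀ k, 0 ≤ y k ∧ y k ≤ pmax) →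
      ∀ k, ∑ i, A k i * y i ≤ θ * (∑ i, A k i * y i + d k) := by
  set C : ι → ℝ := fun k => ∑ i, A k i * pmax
  have hC : ∀ k, 0 ≤ C k := fun k => Finset.sum_nonneg fun i _ => mul_nonneg (hA k i) hpmax
  have hCd : ∀ k, 0 < C k + d k := fun k => add_pos_of_nonneg_of_pos (hC k) (hd k)
  obtain ⟨k₀, hk₀⟩ := exists_eq_ciSup_of_finite (f := fun k => C k / (C k + d k))
  refine ⟨⨆ k, C k / (C k + d k), Real.iSup_nonneg fun k => div_nonneg (hC k) (hCd k).le,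
    hk₀ ▸ (div_lt_one (hCd k₀)).2 (by linarith [hd k₀]), fun y hy k => ?_⟩
  set u := ∑ i, A k i * y i
  have hu : 0 ≤ u := Finset.sum_nonneg fun i _ => mul_nonneg (hA k i) (hy i).1
  have huC : u ≤ C k := Finset.sum_le_sum fun i _ => mul_le_mul_of_nonneg_left (hy i).2 (hA k i)
  calc u ≤ C k / (C k + d k) * (u + d k) := by
        rw [div_mul_eq_mul_div, le_div_iff₀ (hCd k)]
        nlinarith [mul_le_mul_of_nonneg_right huC (hd k).le]
    _ ≤ (⨆ k, C k / (C k + d k)) * (u + d k) := by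
        gcongr
        · linarith [hd k]
        · exact le_ciSup (Finite.bddAbove_range fun k => C k / (C k + d k)) k

theorem isInterferenceContraction_of_affine {F : (ι → ℝ) → ι → ℝ}
    (hF : ∀ x k, F x k = ∑ i, A k i * x i + d k) (hA : ∀ k i, 0 ≤ A k i) (hd : ∀ k, 0 < d k)
    (hpmax : 0 ≤ pmax) : ∃ θ, IsInterferenceContraction F pmax θ := by
  obtain ⟨θ, hθ0, hθ1, hθ⟩ := exists_sum_mul_le_mul_add hA hd hpmax
  refine ⟨θ, ⟨fun x hx k => ?_, fun x y t ht hy hxy k => ?_, ?_, hθ0, hθ1⟩⟩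
  · rw [hF]
    exact add_pos_of_nonneg_of_pos
      (Finset.sum_nonneg fun i _ => mul_nonneg (hA k i) (hx i)) (hd k)
  · have hmono : ∑ i, A k i * x i ≤ t * ∑ i, A k i * y i := by
      rw [Finset.mul_sum]
      refine Finset.sum_le_sum fun i _ => ?_
      rw [mul_left_comm]
      exact mul_le_mul_of_nonneg_left (hxy i) (hA k i)
    rw [hF, hF]
    nlinarith [mul_le_mul_of_nonneg_left (hθ y hy k) (sub_nonneg.2 ht)]
  · rw [show F = fun x k => ∑ i, A k i * x i + d k from funext₂ hF]
    fun_prop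

end Affine

lemma div_eq_sum_mul_add_div {ι : Type*} [Fintype ι] [DecidableEq ι] (a : ι → ι → ℝ)
    (b c x : ι → ℝ) (k : ι) :
    ((∑ i, a k i * x i) - b k * x k + c k) / b k =
      ∑ i, (a k i - if i = k then b k else 0) / b k * x i + c k / b k := by
  simp only [div_mul_eq_mul_div, ← Finset.sum_div, sub_mul, Finset.sum_sub_distrib, ite_mul,
    zero_mul, Finset.sum_ite_eq', Finset.mem_univ, if_true]
  ring

/-- the normalized fixed-point power-control iteration
`p^{(n+1)} = (p_max / max_k I_k(p^{(n)})) · I(p^{(n)})` converges, from any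
strictly positive initial point, to a feasible power vector `p*` that solves
the max-min fairness problem
`maximize min_k SINR_k(p)` subject to `0 ≤ p ≤ p_max`. -/
theorem stmt_15 (K : ℕ) (hK : 1 ≤ K) (pmax : ℝ) (hpmax : 0 < pmax)
    (a : Fin K → Fin K → ℝ) (b c : Fin K → ℝ)
    (ha : ∀ k i, 0 ≤ a k i) (hb : ∀ k, 0 < b k) (hc : ∀ k, 0 < c k)
    (hdiag : ∀ k, b k ≤ a k k)
    (SINR : (Fin K → ℝ) → Fin K → ℝ)
    (hS : ∀ p k, SINR p k = b k * p k / ((∑ i, a k i * p i) - b k * p k + c k))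
    (I : (Fin K → ℝ) → Fin K → ℝ)
    (hI : ∀ p k, I p k = ((∑ i, a k i * p i) - b k * p k + c k) / b k)
    (p : ℕ → Fin K → ℝ) (hp0 : ∀ k, 0 < p 0 k)
    (hrec : ∀ n k, p (n + 1) k = (pmax / (⨆ j, I (p n) j)) * I (p n) k) :
    ∃ pstar : Fin K → ℝ,
      (∀ k, Filter.Tendsto (fun n => p n k) Filter.atTop (nhds (pstar k))) ∧
      (∀ k, 0 ≤ pstar k ∧ pstar k ≤ pmax) ∧
      (∀ q : Fin K → ℝ, (∀ k, 0 ≤ q k ∧ q k ≤ pmax) →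
        (⨅ k, SINR q k) ≤ ⨅ k, SINR pstar k) := by
  have : Nonempty (Fin K) := ⟨⟨0, hK⟩⟩
  have hA : ∀ k i, 0 ≤ (a k i - if i = k then b k else 0) / b k := fun k i => by
    refine div_nonneg ?_ (hb k).le
    split_ifs with h
    · exact sub_nonneg.2 (h ▸ hdiag k)
    · simpa using ha k i
  obtain ⟨θ, hF⟩ := isInterferenceContraction_of_affine
    (fun x k => (hI x k).trans (div_eq_sum_mul_add_div a b c x k)) hA
    (fun k => div_pos (hc k) (hb k)) hpmax.le
  obtain ⟨s, hlim, hfix, hs⟩ := hF.exists_tendsto_iterate hpmax hp0 fun n => funext (hrec n)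
  have hSINR : ∀ x k, SINR x k = x k / I x k := fun x k => by
    rw [hS, hI, div_div_eq_mul_div, mul_comm]
  have hSINRs : ∀ k, SINR s k = pmax / ⨆ j, I s j := fun k => by
    rw [hSINR, div_eq_iff (hF.pos s (fun k => (hs.1 k).1.le) k).ne']
    exact (congrFun hfix k).symm
  refine ⟨s, tendsto_pi_nhds.1 hlim, fun k => ⟨(hs.1 k).1.le, (hs.1 k).2⟩, fun q hq => ?_⟩
  obtain ⟨k, hk⟩ := hF.exists_le_mul_of_fixedPoint hpmax hs hfix hq
  calc ⨅ k, SINR q k ≤ SINR q k := ciInf_le (Finite.bddBelow_range _) k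
    _ ≤ pmax / ⨆ j, I s j := by
        rwa [hSINR, div_le_iff₀ (hF.pos q (fun k => (hq k).1) k)]
    _ = ⨅ k, SINR s k := by simp only [hSINRs, ciInf_const]
end
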